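/- Define lower-triangular (n+1)×(n+1) matrices P and S over R by: P_{ℓℓ} = S_{ℓℓ} = 1 for 1 ≤ ℓ ≤ n+1; P_{jℓ} = L(ℓ, j−1) and S_{jℓ} = (−1)^{j−ℓ} · L*(ℓ, j−1) for 1 ≤ ℓ < j ≤ n+1; and P_{ℓj} = S_{ℓj} = 0 for ℓ < j. Then P·S = S·P = I_{n+1}, i.e., S = P^{−1}. (This is the explicit computation of the inverse Υ = Ψ^{−1} of the rigid analytic trivialization of the Anderson–Thakur dual t-motive, derived from the Lemma on 𝔏 and 𝔏* series.) -/

import Mathlib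

open scoped BigOperators

/-- `Lser f ℓ j = L(ℓ,j) = Σ_{i_ℓ > i_{ℓ+1} > ⋯ > i_j ≥ 0} f_ℓ(i_ℓ)⋯f_j(i_j)`,
the sum over strictly decreasing tuples of nonnegative integers.
By convention `Lser f ℓ (ℓ-1) = 1` (empty tuple). -/
noncomputable def Lser {R : Type*} [NormedCommRing R] (f : ℕ → ℕ → R) (ℓ j : ℕ) : R :=
  ∑' g : {g : Fin (j + 1 - ℓ) → ℕ // StrictAnti g},
    ∏ m : Fin (j + 1 - ℓ), f (ℓ + (m : ℕ)) (g.1 m)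

/-- `Lstar f ℓ j = L*(ℓ,j) = Σ_{0 ≤ i_ℓ ≤ i_{ℓ+1} ≤ ⋯ ≤ i_j} f_ℓ(i_ℓ)⋯f_j(i_j)`,
the sum over weakly increasing tuples of nonnegative integers.
By convention `Lstar f ℓ (ℓ-1) = 1` (empty tuple). -/
noncomputable def Lstar {R : Type*} [NormedCommRing R] (f : ℕ → ℕ → R) (ℓ j : ℕ) : R :=
  ∑' g : {g : Fin (j + 1 - ℓ) → ℕ // Monotone g},
    ∏ m : Fin (j + 1 - ℓ), f (ℓ + (m : ℕ)) (g.1 m)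

/-- The lower-triangular `(n+1)×(n+1)` matrix `P` with `P_{ℓℓ} = 1`, `P_{jℓ} = L(ℓ, j−1)`
for `1 ≤ ℓ < j ≤ n+1` and `P_{ℓj} = 0` for `ℓ < j`.  Rows and columns are indexed by
`Fin (n+1)`, with index `a : Fin (n+1)` corresponding to the `1`-based index `a+1`. -/
noncomputable def Pmat {R : Type*} [NormedCommRing R] (f : ℕ → ℕ → R) (n : ℕ) :
    Matrix (Fin (n + 1)) (Fin (n + 1)) R :=
  Matrix.of fun a b =>
    if (a : ℕ) = b then 1
    else if (b : ℕ) < a then Lser f ((b : ℕ) + 1) (a : ℕ)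
    else 0

/-- The lower-triangular `(n+1)×(n+1)` matrix `S` with `S_{ℓℓ} = 1`,
`S_{jℓ} = (−1)^{j−ℓ} · L*(ℓ, j−1)` for `1 ≤ ℓ < j ≤ n+1` and `S_{ℓj} = 0` for `ℓ < j`. -/
noncomputable def Smat {R : Type*} [NormedCommRing R] (f : ℕ → ℕ → R) (n : ℕ) :
    Matrix (Fin (n + 1)) (Fin (n + 1)) R :=
  Matrix.of fun a b =>
    if (a : ℕ) = b then 1
    else if (b : ℕ) < a then (-1 : R) ^ ((a : ℕ) - b) * Lstar f ((b : ℕ) + 1) (a : ℕ)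
    else 0

/-!
For `b ≤ a`, entry `(a, b)` of `P * S` is `∑ r, (-1) ^ r L*(b+1, b+r) L(b+r+1, a)`. Concatenating
a weakly increasing tuple of length `r` with a strictly decreasing one of length `d - r`
(`d = a - b`) turns each product into the sum over the tuples of length `d` that increase weakly
before position `r` and decrease strictly from position `r` on. When `d > 0`, such a tuple with an
ascent `v (r - 1) ≤ v r` into position `r` is exactly a tuple of the `r + 1` family without ascent
into position `r + 1` (at `r = 0` every tuple counts as having an ascent, at `r = d` none does),
so the alternating sum cancels in pairs. The nonarchimedean norm makes every family involved
summable, which justifies the rearrangements. Finally `S * P = 1` because a one-sided inverse of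
a square matrix over a commutative ring is two-sided.
-/

open Filter Topology

instance IsUltrametricDist.nonarchimedeanRing {R : Type*} [NormedRing R] [IsUltrametricDist R] :
    NonarchimedeanRing R where
  is_nonarchimedean := NonarchimedeanAddGroup.is_nonarchimedean

theorem summable_of_tendsto_norm_atTop_zero {E : Type*} [NormedAddCommGroup E]
    [IsUltrametricDist E] [CompleteSpace E] {g : ℕ → E}
    (hg : Tendsto (fun i => ‖g i‖) atTop (𝓝 0)) : Summable g :=
  NonarchimedeanAddGroup.summable_of_tendsto_cofinite_zero <| by
    rwa [Nat.cofinite_eq_atTop, tendsto_zero_iff_norm_tendsto_zero]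

theorem summable_prod_pi_of_nonarchimedean {R ι : Type*} [CommRing R] [UniformSpace R]
    [IsUniformAddGroup R] [NonarchimedeanRing R] {d : ℕ} {F : Fin d → ι → R}
    (hF : ∀ m, Summable (F m)) : Summable fun v : Fin d → ι => ∏ m, F m (v m) := by
  induction d with
  | zero => exact Summable.of_finite
  | succ d ih =>
    rw [← (Fin.consEquiv fun _ => ι).summable_iff]
    simpa [Function.comp_def, Fin.prod_univ_succ] using
      (hF 0).mul_of_nonarchimedean (ih fun m => hF m.succ)

theorem sum_range_neg_one_pow_mul_add_eq_zero {R : Type*} [Ring R] {a c : ℕ → R} {d : ℕ}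
    (hc : c 0 = 0) (ha : a d = 0) (hca : ∀ r < d, c (r + 1) = a r) :
    ∑ r ∈ Finset.range (d + 1), (-1) ^ r * (a r + c r) = 0 := by
  simp only [mul_add, Finset.sum_add_distrib]
  rw [Finset.sum_range_succ, ha, Finset.sum_range_succ' (fun r => (-1) ^ r * c r), hc]
  have hshift : ∀ r ∈ Finset.range d, (-1) ^ (r + 1) * c (r + 1) = -((-1) ^ r * a r) :=
    fun r hr => by rw [hca r (Finset.mem_range.mp hr), pow_succ, mul_neg_one, neg_mul]
  simp [Finset.sum_congr rfl hshift]

def upDown (d r : ℕ) : Set (Fin d → ℕ) :=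
  {v | MonotoneOn v {i | (i : ℕ) < r} ∧ StrictAntiOn v {i | r ≤ (i : ℕ)}}

theorem append_mem_upDown_iff {r e : ℕ} {g : Fin r → ℕ} {h : Fin e → ℕ} :
    Fin.append g h ∈ upDown (r + e) r ↔ Monotone g ∧ StrictAnti h := by
  constructor
  · rintro ⟨hg, hh⟩
    refine ⟨fun i j hij => ?_, fun i j hij => ?_⟩
    · simpa using hg (a := Fin.castAdd e i) (b := Fin.castAdd e j) (by simp) (by simp) hij
    · simpa using hh (a := Fin.natAdd r i) (b := Fin.natAdd r j) (by simp) (by simp)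
        (by simpa using hij)
  · rintro ⟨hg, hh⟩
    refine ⟨fun i hi j hj hij => ?_, fun i hi j hj hij => ?_⟩
    · induction i using Fin.addCases with
      | right i => exact absurd (show r + (i : ℕ) < r from hi) (by omega)
      | left i =>
        induction j using Fin.addCases with
        | right j => exact absurd (show r + (j : ℕ) < r from hj) (by omega)
        | left j => simpa only [Fin.append_left] using hg hij
    · induction i using Fin.addCases with
      | left i => exact absurd (show r ≤ (i : ℕ) from hi) (by omega)
      | right i =>
        induction j using Fin.addCases with
        | left j => exact absurd (show r + (i : ℕ) < j from hij) (by omega)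
        | right j => simpa using hh (by simpa using hij)

theorem tsum_monotone_mul_tsum_strictAnti {R : Type*} [NormedCommRing R] [IsUltrametricDist R]
    [CompleteSpace R] {r e : ℕ} {F : Fin (r + e) → ℕ → R} (hF : ∀ m, Summable (F m)) :
    (∑' g : {g : Fin r → ℕ // Monotone g}, ∏ m, F (Fin.castAdd e m) (g.1 m)) *
        (∑' h : {h : Fin e → ℕ // StrictAnti h}, ∏ m, F (Fin.natAdd r m) (h.1 m)) =
      ∑' v : upDown (r + e) r, ∏ m, F m (v.1 m) := by
  have hmono : Summable fun g : {g : Fin r → ℕ // Monotone g} =>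
      ∏ m, F (Fin.castAdd e m) (g.1 m) :=
    (summable_prod_pi_of_nonarchimedean fun m => hF _).subtype _
  have hanti : Summable fun h : {h : Fin e → ℕ // StrictAnti h} =>
      ∏ m, F (Fin.natAdd r m) (h.1 m) :=
    (summable_prod_pi_of_nonarchimedean fun m => hF _).subtype _
  rw [tsum_mul_tsum_of_nonarchimedean hmono hanti]
  let split : {g : Fin r → ℕ // Monotone g} × {h : Fin e → ℕ // StrictAnti h} ≃ upDown (r + e) r :=
    Equiv.subtypeProdEquivProd.symm.trans
      ((Fin.appendEquiv r e).subtypeEquiv fun _ => append_mem_upDown_iff.symm)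
  rw [← split.tsum_eq]
  refine tsum_congr fun p => ?_
  simp [split, Fin.prod_univ_add, Equiv.subtypeEquiv, Equiv.subtypeProdEquivProd]

def ascentAt (d r : ℕ) : Set (Fin d → ℕ) :=
  {v | r < d ∧ ∀ i j : Fin d, (i : ℕ) + 1 = r → (j : ℕ) = r → v i ≤ v j}

section UpDown

variable {d r : ℕ} {v : Fin d → ℕ}

theorem mem_upDown_succ (hv : v ∈ upDown d r)
    (hasc : ∀ i j : Fin d, (i : ℕ) + 1 = r → (j : ℕ) = r → v i ≤ v j) : v ∈ upDown d (r + 1) := by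
  refine ⟨fun i hi j hj hij => ?_,
    hv.2.mono fun i (hi : r + 1 ≤ (i : ℕ)) => show r ≤ (i : ℕ) by omega⟩
  simp only [Set.mem_ofPred_eq] at hi hj
  by_cases hjr : (j : ℕ) < r
  · exact hv.1 (show (i : ℕ) < r by rw [Fin.le_def] at hij; omega) hjr hij
  obtain rfl | hij := hij.eq_or_lt
  · rfl
  have hi' : (i : ℕ) ≤ r - 1 := by rw [Fin.lt_def] at hij; omega
  let p : Fin d := ⟨r - 1, by omega⟩
  have hip : i ≤ p := Fin.le_def.mpr hi'
  exact (hv.1 (show (i : ℕ) < r by omega) (show (p : ℕ) < r by simp [p]; omega) hip).trans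
    (hasc p j (by simp [p]; omega) (by omega))

theorem mem_upDown_pred (hv : v ∈ upDown d r)
    (hdesc : ∀ i j : Fin d, (i : ℕ) + 1 = r → (j : ℕ) = r → v j < v i) : v ∈ upDown d (r - 1) := by
  refine ⟨hv.1.mono fun i (hi : (i : ℕ) < r - 1) => show (i : ℕ) < r by omega,
    fun i hi j hj hij => ?_⟩
  simp only [Set.mem_ofPred_eq] at hi hj
  by_cases hir : r ≤ (i : ℕ)
  · exact hv.2 hir (show r ≤ (j : ℕ) by rw [Fin.lt_def] at hij; omega) hij
  rw [Fin.lt_def] at hij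
  let q : Fin d := ⟨r, by omega⟩
  have hqj : v j ≤ v q := by
    obtain hjq | hjq := (show q ≤ j from Fin.le_def.mpr (by simp [q]; omega)).eq_or_lt
    · rw [hjq]
    · exact (hv.2 (show r ≤ (q : ℕ) from le_refl r) (show r ≤ (j : ℕ) by omega) hjq).le
  exact hqj.trans_lt (hdesc i q (by omega) rfl)

theorem upDown_succ_sdiff_ascentAt (hr : r < d) :
    upDown d (r + 1) \ ascentAt d (r + 1) = upDown d r ∩ ascentAt d r := by
  ext v
  constructor
  · rintro ⟨hv, hna⟩
    refine ⟨?_, hr, fun i j hi hj => hv.1 (show (i : ℕ) < r + 1 by omega)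
      (show (j : ℕ) < r + 1 by omega) (Fin.le_def.mpr (by omega))⟩
    refine mem_upDown_pred hv fun i j hi hj => ?_
    by_contra! hle
    refine hna ⟨by omega, fun i' j' hi' hj' => ?_⟩
    rwa [show i' = i from Fin.ext (by omega), show j' = j from Fin.ext (by omega)]
  · rintro ⟨hv, -, hasc⟩
    refine ⟨mem_upDown_succ hv hasc, fun ⟨hr', hasc'⟩ => ?_⟩
    let p : Fin d := ⟨r, hr⟩
    let q : Fin d := ⟨r + 1, hr'⟩
    have hqp : v q < v p :=
      hv.2 (show r ≤ (p : ℕ) from le_rfl) (show r ≤ (q : ℕ) from r.le_succ)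
        (Fin.lt_def.mpr r.lt_succ_self)
    exact (hasc' p q rfl rfl).not_gt hqp

theorem ascentAt_zero (hd : 0 < d) : ascentAt d 0 = Set.univ :=
  Set.eq_univ_of_forall fun _ => ⟨hd, fun _ _ hi _ => by omega⟩

theorem ascentAt_self : ascentAt d d = ∅ :=
  Set.eq_empty_of_forall_notMem fun _ h => lt_irrefl d h.1

theorem sum_range_neg_one_pow_mul_tsum_upDown_eq_zero {R : Type*} [NormedRing R] [CompleteSpace R]
    {Φ : (Fin d → ℕ) → R} (hΦ : Summable Φ) (hd : 0 < d) :
    ∑ r ∈ Finset.range (d + 1), (-1) ^ r * ∑' v : upDown d r, Φ v = 0 := by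
  have hsplit (r : ℕ) : ∑' v : upDown d r, Φ v =
      (∑' v : ↥(upDown d r ∩ ascentAt d r), Φ v) + ∑' v : ↥(upDown d r \ ascentAt d r), Φ v := by
    rw [← Summable.tsum_union_disjoint Set.disjoint_sdiff_inter.symm (hΦ.subtype _) (hΦ.subtype _),
      Set.inter_union_sdiff]
  simp only [hsplit]
  refine sum_range_neg_one_pow_mul_add_eq_zero ?_ ?_ fun r hr => by
    rw [upDown_succ_sdiff_ascentAt hr]
  · rw [ascentAt_zero hd, Set.sdiff_univ, tsum_empty]
  · rw [ascentAt_self, Set.inter_empty, tsum_empty]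

end UpDown

section Series

variable {R : Type*} [NormedCommRing R] (f : ℕ → ℕ → R) {ℓ j c : ℕ}

theorem Lstar_eq_tsum (h : j + 1 - ℓ = c) :
    Lstar f ℓ j = ∑' g : {g : Fin c → ℕ // Monotone g}, ∏ m : Fin c, f (ℓ + m) (g.1 m) := by
  subst h; rfl

theorem Lser_eq_tsum (h : j + 1 - ℓ = c) :
    Lser f ℓ j = ∑' g : {g : Fin c → ℕ // StrictAnti g}, ∏ m : Fin c, f (ℓ + m) (g.1 m) := by
  subst h; rfl

theorem Lstar_eq_one_of_lt (h : j < ℓ) : Lstar f ℓ j = 1 := by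
  rw [Lstar_eq_tsum f (c := 0) (by omega)]
  simp [Fintype.card_subtype, Subsingleton.monotone]

theorem Lser_eq_one_of_lt (h : j < ℓ) : Lser f ℓ j = 1 := by
  rw [Lser_eq_tsum f (c := 0) (by omega)]
  simp [Fintype.card_subtype, Subsingleton.strictAnti]

theorem Lstar_mul_Lser [IsUltrametricDist R] [CompleteSpace R] {b r d : ℕ} (hrd : r ≤ d)
    (hf : ∀ m < d, Summable (f (b + 1 + m))) :
    Lstar f (b + 1) (b + r) * Lser f (b + r + 1) (b + d) =
      ∑' v : upDown d r, ∏ m : Fin d, f (b + 1 + m) (v.1 m) := by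
  obtain ⟨e, rfl⟩ := Nat.exists_eq_add_of_le hrd
  rw [Lstar_eq_tsum f (c := r) (by omega), Lser_eq_tsum f (c := e) (by omega),
    ← tsum_monotone_mul_tsum_strictAnti (F := fun m : Fin (r + e) => f (b + 1 + m))
      fun m => hf m m.2]
  simp only [Fin.val_castAdd, Fin.val_natAdd, ← add_assoc, add_right_comm b 1 r]

theorem sum_range_neg_one_pow_mul_Lstar_mul_Lser_eq_ite [IsUltrametricDist R] [CompleteSpace R]
    {b d : ℕ} (hf : ∀ m < d, Summable (f (b + 1 + m))) :
    ∑ r ∈ Finset.range (d + 1), (-1) ^ r * (Lstar f (b + 1) (b + r) * Lser f (b + r + 1) (b + d)) =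
      if d = 0 then 1 else 0 := by
  rcases Nat.eq_zero_or_pos d with rfl | hd
  · simp [Lstar_eq_one_of_lt, Lser_eq_one_of_lt]
  rw [if_neg hd.ne']
  refine (Finset.sum_congr rfl fun r hr => ?_).trans (sum_range_neg_one_pow_mul_tsum_upDown_eq_zero
    (summable_prod_pi_of_nonarchimedean fun m => hf m m.2) hd)
  rw [Lstar_mul_Lser f (Nat.lt_succ_iff.mp (Finset.mem_range.mp hr)) hf]

end Series

section Matrices

variable {R : Type*} [NormedCommRing R] (f : ℕ → ℕ → R) {n : ℕ}

theorem Pmat_apply (a k : Fin (n + 1)) :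
    Pmat f n a k = if (k : ℕ) ≤ a then Lser f (k + 1) a else 0 := by
  simp only [Pmat, Matrix.of_apply]
  split_ifs <;> first | rfl | omega | (rw [Lser_eq_one_of_lt]; omega)

theorem Smat_apply (k b : Fin (n + 1)) :
    Smat f n k b = if (b : ℕ) ≤ k then (-1) ^ ((k : ℕ) - b) * Lstar f (b + 1) k else 0 := by
  simp only [Smat, Matrix.of_apply]
  split_ifs <;> first | rfl | omega | (simp [*, Lstar_eq_one_of_lt])

theorem Pmat_mul_Smat_apply (a b : Fin (n + 1)) :
    (Pmat f n * Smat f n) a b = if (b : ℕ) ≤ a then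
      ∑ r ∈ Finset.range (a - b + 1), (-1) ^ r * (Lstar f (b + 1) (b + r) * Lser f (b + r + 1) a)
      else 0 := by
  rw [Matrix.mul_apply]
  simp only [Pmat_apply, Smat_apply, ite_zero_mul_ite_zero]
  rw [Fin.sum_univ_eq_sum_range (fun k => if k ≤ a ∧ b ≤ k then
    Lser f (k + 1) a * ((-1) ^ (k - b) * Lstar f (b + 1) k) else 0), ← Finset.sum_filter,
    show (Finset.range (n + 1)).filter (fun k : ℕ => k ≤ a ∧ b ≤ k) = Finset.Ico (b : ℕ) (a + 1) by
      ext; simp; omega, Finset.sum_Ico_eq_sum_range]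
  split_ifs with hba
  · rw [show (a : ℕ) + 1 - b = a - b + 1 by omega]
    refine Finset.sum_congr rfl fun r _ => ?_
    rw [Nat.add_sub_cancel_left]
    ring
  · simp [show (a : ℕ) + 1 - b = 0 by omega]

end Matrices

theorem stmt2_general {R : Type*} [NormedCommRing R] [IsUltrametricDist R] [CompleteSpace R]
    (n : ℕ) (f : ℕ → ℕ → R)
    (hf : ∀ m, 1 ≤ m → m ≤ n → Filter.Tendsto (fun i => ‖f m i‖) Filter.atTop (nhds 0)) :
    Pmat f n * Smat f n = 1 ∧ Smat f n * Pmat f n = 1 := by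
  have hPS : Pmat f n * Smat f n = 1 := by
    ext a b
    rw [Pmat_mul_Smat_apply, Matrix.one_apply]
    by_cases hba : (b : ℕ) ≤ a
    · obtain ⟨d, hd⟩ := Nat.exists_eq_add_of_le hba
      have hsum : ∀ m < d, Summable (f (b + 1 + m)) := fun m hm =>
        summable_of_tendsto_norm_atTop_zero (hf _ (by omega) (by omega))
      rw [if_pos hba, hd, Nat.add_sub_cancel_left,
        sum_range_neg_one_pow_mul_Lstar_mul_Lser_eq_ite f hsum]
      simp [Fin.ext_iff, hd]
    · rw [if_neg hba, if_neg fun h : a = b => hba (h ▸ le_rfl)]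
  exact ⟨hPS, mul_eq_one_comm.mp hPS⟩

/-- `P·S = S·P = I_{n+1}`, i.e. `S = P⁻¹` : the explicit computation of the inverse
`Υ = Ψ⁻¹` of the rigid analytic trivialization of the Anderson–Thakur dual t-motive. -/
theorem stmt2 {R : Type*} [NormedCommRing R] [IsUltrametricDist R] [CompleteSpace R]
    (n : ℕ) (hn : 1 ≤ n) (f : ℕ → ℕ → R)
    (hf : ∀ m, 1 ≤ m → m ≤ n → Filter.Tendsto (fun i => ‖f m i‖) Filter.atTop (nhds 0)) :
    Pmat f n * Smat f n = 1 ∧ Smat f n * Pmat f n = 1 :=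
  stmt2_general n f hf
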